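/- arXiv:1309.7458 — 4 statements merged into one kernel-verified Lean document; each statement's English description precedes it below -/
import Mathlib

section
/- If (g_1,…,g_n) and (h_1,…,h_n) are two generating n-tuples of a group G, then the 2n-tuples (g_1,…,g_n,1,…,1) (with n trailing identity entries) and (h_1,…,h_n,1,…,1) are Nielsen equivalent in G. -/
/-!
Entries of a tuple that already generate `G` can be used to rewrite every other entry into
anything: right multiplication by a product of the other entries and their inverses is a chain of
elementary moves. Hence `(g, 1) ~ (g, h)` using the generators `g`, then `(g, h) ~ (h, h)` using
the generators `h`, and finally `(h, h) ~ (h, 1)`, again using `h`.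
-/

/-- An elementary Nielsen transformation on an `n`-tuple of elements of `G`:
inverting an entry, swapping two entries, or multiplying an entry on the right
by another entry or its inverse. -/
def ElemNielsen {G : Type*} [Group G] {n : ℕ} (g g' : Fin n → G) : Prop :=
  (∃ i, g' = Function.update g i (g i)⁻¹) ∨
  (∃ i j, i ≠ j ∧ g' = g ∘ (Equiv.swap i j)) ∨
  (∃ i j, i ≠ j ∧ (g' = Function.update g i (g i * g j) ∨
                   g' = Function.update g i (g i * (g j)⁻¹)))

/-- Nielsen equivalence: a finite chain of elementary Nielsen transformations. -/
def NielsenEq {G : Type*} [Group G] {n : ℕ} (g g' : Fin n → G) : Prop :=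
  Relation.ReflTransGen ElemNielsen g g'

namespace NielsenEq

variable {G : Type*} [Group G] {m : ℕ}

theorem trans {f f' f'' : Fin m → G} (h : NielsenEq f f') (h' : NielsenEq f' f'') :
    NielsenEq f f'' :=
  Relation.ReflTransGen.trans h h'

theorem update_mul_of_mem_closure (f : Fin m → G) (j : Fin m) {x : G}
    (hx : x ∈ Subgroup.closure (f '' {j}ᶜ)) :
    NielsenEq f (Function.update f j (f j * x)) := by
  suffices ∀ c, NielsenEq (Function.update f j c) (Function.update f j (c * x)) by
    simpa using this (f j)
  induction hx using Subgroup.closure_induction'' with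
  | mem _ hy =>
    obtain ⟨k, hkj, rfl⟩ := hy
    refine fun c => .single (Or.inr (Or.inr ⟨j, k, Ne.symm hkj, Or.inl ?_⟩))
    simp [Function.update_of_ne hkj]
  | inv_mem _ hy =>
    obtain ⟨k, hkj, rfl⟩ := hy
    refine fun c => .single (Or.inr (Or.inr ⟨j, k, Ne.symm hkj, Or.inr ?_⟩))
    simp [Function.update_of_ne hkj]
  | one => simpa using fun _ => .refl
  | mul x y _ _ hx hy => exact fun c => (hx c).trans (mul_assoc c x y ▸ hy (c * x))

theorem of_eqOn {f f' : Fin m → G} {S : Set (Fin m)} (hS : Subgroup.closure (f '' S) = ⊤)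
    (heq : S.EqOn f f') : NielsenEq f f' := by
  classical
  suffices ∀ (s : Finset (Fin m)) (f' : Fin m → G), (∀ i ∉ s, f' i = f i) →
      (∀ i ∈ s, i ∉ S) → NielsenEq f f' from
    this (Finset.univ.filter (· ∉ S)) f' (fun i hi => by simp_all [heq _]) (by simp)
  intro s
  induction s using Finset.induction_on with
  | empty => intro f' hf' _; simpa [funext fun i => hf' i (Finset.notMem_empty i)] using .refl
  | insert a s ha ih =>
    intro f' hf' hsS
    -- Reset entry `a` to `f a`; the other entries still contain `f '' S`, so they generate `G`
    -- and one multiplication from the right turns `f a` into `f' a`.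
    set t := Function.update f' a (f a)
    have hft : NielsenEq f t := ih t
      (fun i hi => by by_cases hia : i = a <;> simp_all [t])
      (fun i hi => hsS i (Finset.mem_insert_of_mem hi))
    have hgen : Subgroup.closure (t '' {a}ᶜ) = ⊤ := by
      refine eq_top_iff.mpr (hS ▸ Subgroup.closure_mono ?_)
      rintro _ ⟨i, hi, rfl⟩
      have hia : i ≠ a := fun h => hsS a (Finset.mem_insert_self a s) (h ▸ hi)
      have his : i ∉ s := fun h => hsS i (Finset.mem_insert_of_mem h) hi
      exact ⟨i, hia, by simp [t, hia, hf' i (by simp [hia, his])]⟩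
    have htf' := update_mul_of_mem_closure t a (x := (f a)⁻¹ * f' a) (hgen ▸ Subgroup.mem_top _)
    convert hft.trans htf'
    simp [t]

end NielsenEq

section Append

variable {G : Type*} [Group G] {m n : ℕ}

theorem nielsenEq_append_of_left_generates {g : Fin m → G}
    (hg : Subgroup.closure (Set.range g) = ⊤) (u v : Fin n → G) :
    NielsenEq (Fin.append g u) (Fin.append g v) := by
  refine NielsenEq.of_eqOn (S := Set.range (Fin.castAdd n)) ?_ ?_
  · rwa [← Set.range_comp, show Fin.append g u ∘ Fin.castAdd n = g from funext (by simp)]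
  · rintro _ ⟨i, rfl⟩
    simp

theorem nielsenEq_append_of_right_generates {h : Fin n → G}
    (hh : Subgroup.closure (Set.range h) = ⊤) (u v : Fin m → G) :
    NielsenEq (Fin.append u h) (Fin.append v h) := by
  refine NielsenEq.of_eqOn (S := Set.range (Fin.natAdd m)) ?_ ?_
  · rwa [← Set.range_comp, show Fin.append u h ∘ Fin.natAdd m = h from funext (by simp)]
  · rintro _ ⟨i, rfl⟩
    simp

end Append

/-- any two generating `n`-tuples of `G` become Nielsen equivalent
after `n` stabilization moves (appending `n` trivial entries). -/
theorem nielsenEq_append_ones {G : Type*} [Group G] {n : ℕ} (g h : Fin n → G)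
    (hg : Subgroup.closure (Set.range g) = ⊤)
    (hh : Subgroup.closure (Set.range h) = ⊤) :
    NielsenEq (Fin.append g (fun (_ : Fin n) => (1 : G))) (Fin.append h (fun (_ : Fin n) => (1 : G))) :=
  ((nielsenEq_append_of_left_generates hg _ h).trans
    (nielsenEq_append_of_right_generates hh g h)).trans
    (nielsenEq_append_of_left_generates hh h _)
end

section
/- Let n ≥ 2, let R_n be the rose with n petals, and let p : Γ → R_n be a path-surjective morphism from a finite connected core graph Γ such that (1) there is no morphism f : R_n → Γ with p ∘ f = id (i.e., R_n does not lift to Γ), and (2) the first Betti number of Γ satisfies b(Γ) ≤ 2n − 1. Then p is a 2-sheeted covering map. -/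
structure MGraph where
  V : Type
  E : Type
  bar : E → E
  bar_bar : ∀ e, bar (bar e) = e
  bar_ne : ∀ e, bar e ≠ e
  ini : E → V

namespace MGraph

variable (G : MGraph)

/-- Terminal vertex of an oriented edge. -/
def ter (e : G.E) : G.V := G.ini (G.bar e)

/-- Two vertices are adjacent if some oriented edge joins them. -/
def Adj (u v : G.V) : Prop := ∃ e : G.E, G.ini e = u ∧ G.ter e = v

/-- The setoid of connectedness on vertices. -/
def compSetoid : Setoid G.V := ⟨Relation.EqvGen G.Adj, Relation.EqvGen.is_equivalence _⟩

/-- The number of connected components. -/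
noncomputable def ncomp : ℕ := Nat.card (Quotient G.compSetoid)

/-- The first Betti number `b = E - V + C` (topological edges). -/
noncomputable def betti : ℤ := ((Nat.card G.E / 2 : ℕ) : ℤ) - (Nat.card G.V : ℤ) + (G.ncomp : ℤ)

def Connected : Prop := Nonempty G.V ∧ ∀ u v : G.V, Relation.EqvGen G.Adj u v

/-- Degree of a vertex: number of oriented edges starting at it. -/
noncomputable def degree (v : G.V) : ℕ := Nat.card {e : G.E // G.ini e = v}

/-- An edge-path: consecutive edges match up. -/
def IsChain (γ : List G.E) : Prop := List.Chain' (fun e e' => G.ter e = G.ini e') γ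

/-- A reduced edge-path: no backtracking. -/
def IsReducedPath (γ : List G.E) : Prop :=
  List.Chain' (fun e e' => G.ter e = G.ini e' ∧ e' ≠ G.bar e) γ

end MGraph

/-- A morphism of graphs. -/
structure MGraphHom (G H : MGraph) where
  toV : G.V → H.V
  toE : G.E → H.E
  map_bar : ∀ e, toE (G.bar e) = H.bar (toE e)
  map_ini : ∀ e, H.ini (toE e) = toV (G.ini e)

/-- A covering map: surjective on vertices and locally bijective on stars. -/
def MGraphHom.IsCovering {G H : MGraph} (f : MGraphHom G H) : Prop :=
  Function.Surjective f.toV ∧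
    ∀ v : G.V, Set.BijOn f.toE {e | G.ini e = v} {e | H.ini e = f.toV v}

/-- The rose with `n` petals: one vertex, `n` loop edge-pairs.
The positive orientation of petal `i` is `(i, true)`. -/
def Rose (n : ℕ) : MGraph where
  V := Unit
  E := Fin n × Bool
  bar e := (e.1, !e.2)
  bar_bar e := by simp
  bar_ne e h := by simpa using congrArg Prod.snd h
  ini _ := ()

/-- A morphism is path-surjective if every reduced path downstairs lifts. -/
def MGraphHom.PathSurjective {G H : MGraph} (p : MGraphHom G H) : Prop :=
  ∀ γ : List H.E, H.IsReducedPath γ → ∃ β : List G.E, G.IsChain β ∧ β.map p.toE = γ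

/-!
For a reduced word `γ` in the petals, let `Q(γ)` be the set of final edges of its lifts; it is
nonempty by path-surjectivity, and `Q(γb)` consists of the edges over `b` starting at the ends of
`Q(γ)`. These sets for the `2n - 1` letters `b` that may follow `γ`, together with the reverses of
the edges of `Q(γ)`, are disjoint sets of edges at the ends of `Q(γ)`. So if `m` is the least size
of a set `Q(γ)`, then `(2n - 1) m + |Q(γ)|` is at most the total degree of the ends of `Q(γ)`.
In a core graph the total excess `∑ (deg v - 2) = 2 b(Γ) - 2` is at most `4n - 4`, which forces
`m ≤ 2`.

If `m = 2`, every estimate is an equality: the ends of each minimal `Q(γ)` are exactly the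
vertices of degree at least `3`, there are two of them, each carries exactly one lift of every
letter, and no edge leaves them, so they are all of `Γ`.

If `m = 1`, the end of a uniquely liftable word has degree at least `2n`. If all such ends are one
vertex `u`, counting the letters with a unique lift at `u` shows that every petal lifts to a loop
at `u`, so that `R_n` lifts. Otherwise two such ends of degree `2n` exhaust the excess, and the same
closure argument shows that `Γ` is a 2-sheeted cover.
-/

open Finset

namespace MGraph

variable {G : MGraph}

@[simp] lemma ter_bar (e : G.E) : G.ter (G.bar e) = G.ini e := by
  rw [ter, bar_bar]

lemma bar_injective : Function.Injective G.bar :=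
  Function.Involutive.injective G.bar_bar

lemma Connected.eq_univ_of_ter_mem (hconn : G.Connected) {S : Set G.V} (hS : S.Nonempty)
    (hclosed : ∀ e, G.ini e ∈ S → G.ter e ∈ S) : S = Set.univ := by
  have hadj : ∀ u v, G.Adj u v → (u ∈ S ↔ v ∈ S) := by
    rintro _ _ ⟨e, rfl, rfl⟩
    exact ⟨hclosed e, fun h => by simpa using hclosed (G.bar e) h⟩
  have hequiv : Equivalence fun u v => (u ∈ S ↔ v ∈ S) :=
    ⟨fun _ => Iff.rfl, Iff.symm, Iff.trans⟩
  obtain ⟨s, hs⟩ := hS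
  exact Set.eq_univ_of_forall fun v =>
    (hequiv.eqvGen_iff.1 (Relation.EqvGen.mono hadj _ _ (hconn.2 s v))).1 hs

lemma isChain_append_pair {β : List G.E} {δ ε : G.E} :
    G.IsChain (β ++ [δ, ε]) ↔ G.IsChain (β ++ [δ]) ∧ G.ter δ = G.ini ε :=
  List.isChain_append_cons_cons.trans (and_congr_right fun _ => and_iff_left (.singleton _))

lemma IsReducedPath.append_singleton {γ : List G.E} {ℓ b : G.E}
    (hγ : G.IsReducedPath (γ ++ [ℓ])) (hb : G.ter ℓ = G.ini b) (hb' : b ≠ G.bar ℓ) :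
    G.IsReducedPath (γ ++ [ℓ, b]) :=
  List.isChain_append_cons_cons.2 ⟨hγ, ⟨hb, hb'⟩, .singleton _⟩

lemma Connected.ncomp_eq_one (hconn : G.Connected) : G.ncomp = 1 := by
  obtain ⟨⟨v⟩, hrel⟩ := hconn
  have : Subsingleton (Quotient G.compSetoid) :=
    ⟨Quotient.ind₂ fun a b => Quotient.sound (hrel a b)⟩
  have : Nonempty (Quotient G.compSetoid) := ⟨Quotient.mk _ v⟩
  exact Nat.card_unique

lemma degree_sub_two_le_sum {s : Finset G.V} {v : G.V} (hv : v ∈ s) :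
    G.degree v - 2 ≤ ∑ w ∈ s, (G.degree w - 2) :=
  single_le_sum (f := fun w => G.degree w - 2) (fun _ _ => Nat.zero_le _) hv

section Excess

variable [Fintype G.V]

noncomputable def excess : ℕ := ∑ v, (G.degree v - 2)

open scoped Classical in
lemma sum_degree_add_sum_compl (hcore : ∀ v, 2 ≤ G.degree v) (T : Finset G.V) :
    ∑ v ∈ T, G.degree v + ∑ v ∈ Tᶜ, (G.degree v - 2) = 2 * #T + G.excess := by
  have hT : ∑ v ∈ T, G.degree v = ∑ v ∈ T, (G.degree v - 2) + 2 * #T := by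
    rw [mul_comm, ← smul_eq_mul, ← sum_const, ← sum_add_distrib]
    exact sum_congr rfl fun v _ => (Nat.sub_add_cancel (hcore v)).symm
  rw [excess, ← sum_add_sum_compl T, hT]
  ring

open scoped Classical in
noncomputable def branchVertices : Finset G.V := {v | 3 ≤ G.degree v}

end Excess

section Finite

variable [Fintype G.E]

open scoped Classical in
lemma card_filter_ini_eq_degree (v : G.V) : #{e | G.ini e = v} = G.degree v := by
  rw [degree, Nat.card_eq_fintype_card, Fintype.card_subtype]

lemma sum_degree [Fintype G.V] : ∑ v, G.degree v = Fintype.card G.E := by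
  classical
  simp_rw [← card_filter_ini_eq_degree]
  exact (card_eq_sum_card_fiberwise fun e _ => mem_univ (G.ini e)).symm

lemma even_card_E : Even (Fintype.card G.E) := by
  classical
  let σ := Function.Involutive.toPerm G.bar G.bar_bar
  have hσ : σ ^ 2 = 1 := Equiv.ext fun e => G.bar_bar e
  have hsupp : σ.support = univ := eq_univ_of_forall fun e => Equiv.Perm.mem_support.2 (G.bar_ne e)
  rw [even_iff_two_dvd, ← card_univ, ← hsupp]
  exact Equiv.Perm.two_dvd_card_support hσ

lemma Connected.excess_eq [Fintype G.V] (hconn : G.Connected) (hcore : ∀ v, 2 ≤ G.degree v) :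
    (G.excess : ℤ) = 2 * G.betti - 2 := by
  obtain ⟨k, hk⟩ := G.even_card_E
  have hsum : G.excess + 2 * Fintype.card G.V = Fintype.card G.E := by
    rw [excess, ← sum_degree, ← card_univ, mul_comm, ← smul_eq_mul, ← sum_const,
      ← sum_add_distrib]
    exact sum_congr rfl fun v _ => Nat.sub_add_cancel (hcore v)
  rw [betti, hconn.ncomp_eq_one, Nat.card_eq_fintype_card, Nat.card_eq_fintype_card, hk]
  omega

end Finite

end MGraph

/-! ### Lifts of words -/

namespace MGraphHom

variable {G H : MGraph} (p : MGraphHom G H)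

open scoped Classical

def IsTwoSheetedCovering : Prop :=
  p.IsCovering ∧ ∀ v : H.V, Nat.card {u : G.V // p.toV u = v} = 2

section Lifts

variable [Fintype G.E]

noncomputable def liftEnds (γ : List H.E) : Finset G.E :=
  {ε | ∃ β, G.IsChain (β ++ [ε]) ∧ (β ++ [ε]).map p.toE = γ}

noncomputable def liftsFrom (T : Finset G.V) (a : H.E) : Finset G.E :=
  {e | G.ini e ∈ T ∧ p.toE e = a}

noncomputable def mult (v : G.V) (a : H.E) : ℕ := #(p.liftsFrom {v} a)

variable {p}

@[simp] lemma mem_liftsFrom {T : Finset G.V} {a : H.E} {e : G.E} :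
    e ∈ p.liftsFrom T a ↔ G.ini e ∈ T ∧ p.toE e = a := by
  simp [liftsFrom]

lemma toE_of_mem_liftEnds {γ : List H.E} {a : H.E} {ε : G.E}
    (hε : ε ∈ p.liftEnds (γ ++ [a])) : p.toE ε = a := by
  obtain ⟨β, -, hβ⟩ := (mem_filter.1 hε).2
  simpa using congrArg List.getLast? hβ

lemma liftEnds_append_singleton (γ : List H.E) (ℓ b : H.E) :
    p.liftEnds (γ ++ [ℓ, b]) = p.liftsFrom ((p.liftEnds (γ ++ [ℓ])).image G.ter) b := by
  ext ε
  simp only [liftEnds, mem_liftsFrom, mem_image, mem_filter, mem_univ, true_and]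
  constructor
  · rintro ⟨β, hchain, hmap⟩
    obtain rfl | ⟨β, δ, rfl⟩ := List.eq_nil_or_concat β
    · simpa using congrArg List.length hmap
    simp only [List.concat_eq_append, List.append_assoc, List.singleton_append,
      MGraph.isChain_append_pair, List.map_append, List.map_cons, List.map_nil] at hchain hmap
    obtain ⟨hβ, hδε⟩ := List.append_inj' hmap rfl
    simp only [List.cons.injEq, and_true] at hδε
    exact ⟨⟨δ, ⟨β, hchain.1, by simp [hβ, hδε.1]⟩, hchain.2⟩, hδε.2⟩
  · rintro ⟨⟨δ, ⟨β, hchain, hmap⟩, hδε⟩, rfl⟩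
    refine ⟨β ++ [δ], ?_, ?_⟩
    · simpa [MGraph.isChain_append_pair] using ⟨hchain, hδε⟩
    · simpa using congrArg (· ++ [p.toE ε]) hmap

lemma liftEnds_nonempty (hps : p.PathSurjective) {γ : List H.E} {a : H.E}
    (hγ : H.IsReducedPath (γ ++ [a])) : (p.liftEnds (γ ++ [a])).Nonempty := by
  obtain ⟨β, hchain, hmap⟩ := hps _ hγ
  obtain rfl | ⟨β, ε, rfl⟩ := List.eq_nil_or_concat β
  · simpa using congrArg List.length hmap
  · rw [List.concat_eq_append] at hchain hmap
    exact ⟨ε, mem_filter.2 ⟨mem_univ _, β, hchain, hmap⟩⟩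

lemma card_liftsFrom (T : Finset G.V) (a : H.E) :
    #(p.liftsFrom T a) = ∑ v ∈ T, p.mult v a := by
  rw [card_eq_sum_card_fiberwise fun e he => (mem_liftsFrom.1 he).1]
  refine sum_congr rfl fun v hv => congrArg card ?_
  ext e
  simp only [mem_filter, mem_liftsFrom, mem_singleton]
  grind

lemma exists_of_one_le_mult {v : G.V} {a : H.E} (h : 1 ≤ p.mult v a) :
    ∃ e, G.ini e = v ∧ p.toE e = a := by
  obtain ⟨e, he⟩ := card_pos.1 h
  simp only [mem_liftsFrom, mem_singleton] at he
  exact ⟨e, he⟩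

lemma liftsFrom_eq_singleton {v : G.V} {α : G.E} (hα : G.ini α = v)
    (h1 : p.mult v (p.toE α) = 1) : p.liftsFrom {v} (p.toE α) = {α} := by
  obtain ⟨e, he⟩ := card_eq_one.1 h1
  have hmem : α ∈ p.liftsFrom {v} (p.toE α) := mem_liftsFrom.2 ⟨mem_singleton.2 hα, rfl⟩
  rw [he, mem_singleton] at hmem
  subst hmem
  exact he

variable [Fintype H.E]

lemma sum_mult (v : G.V) : ∑ a, p.mult v a = G.degree v := by
  rw [← MGraph.card_filter_ini_eq_degree (G := G),
    card_eq_sum_card_fiberwise fun e _ => mem_univ (p.toE e)]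
  refine sum_congr rfl fun a _ => congrArg card ?_
  ext e
  simp

lemma sum_card_liftsFrom (T : Finset G.V) :
    ∑ a, #(p.liftsFrom T a) = ∑ v ∈ T, G.degree v := by
  simp_rw [card_liftsFrom, ← sum_mult (p := p)]
  exact sum_comm

lemma card_add_sum_card_liftsFrom_le [DecidableEq H.E] {Q : Finset G.E} {ℓ : H.E}
    (hQ : ∀ ε ∈ Q, p.toE ε = ℓ) :
    #Q + ∑ b ∈ univ.erase (H.bar ℓ), #(p.liftsFrom (Q.image G.ter) b)
      ≤ ∑ v ∈ Q.image G.ter, G.degree v := by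
  have hbar : #Q ≤ #(p.liftsFrom (Q.image G.ter) (H.bar ℓ)) := by
    rw [← card_image_of_injective Q MGraph.bar_injective]
    refine card_le_card fun e he => ?_
    obtain ⟨ε, hε, rfl⟩ := mem_image.1 he
    exact mem_liftsFrom.2 ⟨mem_image_of_mem _ hε, by rw [p.map_bar, hQ ε hε]⟩
  rw [← sum_card_liftsFrom (p := p), ← add_sum_erase _ _ (mem_univ (H.bar ℓ))]
  omega

end Lifts

section LiftStates

variable [Fintype G.E]

def IsLiftState (Q : Finset G.E) (ℓ : H.E) : Prop :=
  ∃ γ, H.IsReducedPath (γ ++ [ℓ]) ∧ p.liftEnds (γ ++ [ℓ]) = Q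

noncomputable def minLiftCard : ℕ := sInf {k | ∃ Q ℓ, p.IsLiftState Q ℓ ∧ #Q = k}

variable {p}

lemma isLiftState_liftEnds (a : H.E) : p.IsLiftState (p.liftEnds [a]) a :=
  ⟨[], List.isChain_singleton _, rfl⟩

namespace IsLiftState

variable {Q : Finset G.E} {ℓ : H.E}

lemma toE_eq (h : p.IsLiftState Q ℓ) {ε : G.E} (hε : ε ∈ Q) : p.toE ε = ℓ := by
  obtain ⟨γ, -, rfl⟩ := h
  exact toE_of_mem_liftEnds hε

lemma nonempty (hps : p.PathSurjective) (h : p.IsLiftState Q ℓ) : Q.Nonempty := by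
  obtain ⟨γ, hγ, rfl⟩ := h
  exact liftEnds_nonempty hps hγ

lemma liftsFrom (h : p.IsLiftState Q ℓ) {b : H.E} (hb : b ≠ H.bar ℓ)
    (hcomp : H.ter ℓ = H.ini b) : p.IsLiftState (p.liftsFrom (Q.image G.ter) b) b := by
  obtain ⟨γ, hγ, rfl⟩ := h
  exact ⟨γ ++ [ℓ], by simpa using hγ.append_singleton hcomp hb,
    by simpa using liftEnds_append_singleton γ ℓ b⟩

lemma one_le_mult_bar (h : p.IsLiftState Q ℓ) {v : G.V} (hv : v ∈ Q.image G.ter) :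
    1 ≤ p.mult v (H.bar ℓ) := by
  obtain ⟨δ, hδ, rfl⟩ := mem_image.1 hv
  exact card_pos.2 ⟨G.bar δ, mem_liftsFrom.2 ⟨mem_singleton_self _, by rw [p.map_bar, h.toE_eq hδ]⟩⟩

lemma eq_bar_of_mult_eq_one {ε : G.E} (h : p.IsLiftState {ε} ℓ) {α : G.E}
    (hα : G.ini α = G.ter ε) (hb : p.toE α = H.bar ℓ) (h1 : p.mult (G.ter ε) (p.toE α) = 1) :
    α = G.bar ε := by
  have hbar : G.bar ε ∈ p.liftsFrom {G.ter ε} (p.toE α) :=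
    mem_liftsFrom.2 ⟨mem_singleton_self _, by rw [p.map_bar, hb, h.toE_eq (mem_singleton_self ε)]⟩
  rw [liftsFrom_eq_singleton hα h1, mem_singleton] at hbar
  exact hbar.symm

lemma minLiftCard_le (h : p.IsLiftState Q ℓ) : p.minLiftCard ≤ #Q :=
  Nat.sInf_le ⟨Q, ℓ, h, rfl⟩

end IsLiftState

lemma exists_isLiftState_card_eq_minLiftCard [Nonempty H.E] :
    ∃ Q ℓ, p.IsLiftState Q ℓ ∧ #Q = p.minLiftCard :=
  Nat.sInf_mem (s := {k | ∃ Q ℓ, p.IsLiftState Q ℓ ∧ #Q = k})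
    ⟨_, _, _, isLiftState_liftEnds (Classical.arbitrary H.E), rfl⟩

lemma one_le_minLiftCard [Nonempty H.E] (hps : p.PathSurjective) : 1 ≤ p.minLiftCard := by
  obtain ⟨Q, ℓ, hQ, hcard⟩ := exists_isLiftState_card_eq_minLiftCard (p := p)
  exact hcard ▸ card_pos.2 (hQ.nonempty hps)

end LiftStates

end MGraphHom

/-! ### Morphisms to the rose -/

namespace Rose

variable {n : ℕ}

instance : Fintype (Rose n).E := inferInstanceAs (Fintype (Fin n × Bool))

instance : DecidableEq (Rose n).E := inferInstanceAs (DecidableEq (Fin n × Bool))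

instance : Unique (Rose n).V := inferInstanceAs (Unique Unit)

lemma card_E : Fintype.card (Rose n).E = 2 * n := by
  simp [show Fintype.card (Rose n).E = Fintype.card (Fin n × Bool) from rfl, mul_comm]

lemma card_univ_erase (a : (Rose n).E) : #(univ.erase a) = 2 * n - 1 := by
  rw [card_erase_of_mem (mem_univ _), card_univ, card_E]

end Rose

namespace MGraphHom

open scoped Classical

variable {n : ℕ} {G : MGraph} {p : MGraphHom G (Rose n)}

lemma exists_section_of_loops (u : G.V)
    (hloop : ∀ i : Fin n, ∃ e, G.ini e = u ∧ G.ter e = u ∧ p.toE e = (i, true)) :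
    ∃ f : MGraphHom (Rose n) G, (∀ x, p.toV (f.toV x) = x) ∧ ∀ e, p.toE (f.toE e) = e := by
  choose loop hini hter hlabel using hloop
  let toE : (Rose n).E → G.E := fun e => Bool.rec (G.bar (loop e.1)) (loop e.1) e.2
  refine ⟨⟨fun _ => u, toE, ?_, ?_⟩, fun _ => Subsingleton.elim _ _, ?_⟩
  · rintro ⟨i, _ | _⟩
    · exact (G.bar_bar _).symm
    · rfl
  · rintro ⟨i, _ | _⟩
    · exact hter i
    · exact hini i
  · rintro ⟨i, _ | _⟩
    · simp only [toE, p.map_bar, hlabel]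
      rfl
    · exact hlabel i

section

variable [Fintype G.E]

lemma sum_mult_sub_one {v : G.V} (hfull : ∀ a, 1 ≤ p.mult v a) :
    ∑ a, (p.mult v a - 1) = G.degree v - 2 * n := by
  have h : ∑ a, (p.mult v a - 1) + ∑ _a : (Rose n).E, 1 = G.degree v := by
    rw [← sum_add_distrib, ← sum_mult (p := p) v]
    exact sum_congr rfl fun a _ => Nat.sub_add_cancel (hfull a)
  rw [sum_const, card_univ, Rose.card_E, smul_eq_mul, mul_one] at h
  omega

lemma mult_eq_one_of_degree_le {v : G.V} (hfull : ∀ a, 1 ≤ p.mult v a)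
    (hdeg : G.degree v ≤ 2 * n) (a : (Rose n).E) : p.mult v a = 1 := by
  have := single_le_sum (fun b _ => Nat.zero_le (p.mult v b - 1)) (mem_univ a)
  rw [sum_mult_sub_one hfull] at this
  have := hfull a
  omega

lemma exists_ne_mult_eq_one {v : G.V} (hfull : ∀ a, 1 ≤ p.mult v a)
    (hdeg : G.degree v + 2 ≤ 4 * n) (d : (Rose n).E) : ∃ c ≠ d, p.mult v c = 1 := by
  by_contra! hall
  have hsum : ∑ _c ∈ univ.erase d, 1 ≤ ∑ c ∈ univ.erase d, (p.mult v c - 1) :=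
    sum_le_sum fun c hc => by
      have := hfull c
      have := hall c (ne_of_mem_erase hc)
      omega
  replace hsum := hsum.trans (sum_le_sum_of_subset (subset_univ _))
  rw [sum_const, smul_eq_mul, mul_one, Rose.card_univ_erase, sum_mult_sub_one hfull] at hsum
  omega

lemma isCovering_of_mult_eq_one [Nonempty G.V] (hmult : ∀ v a, p.mult v a = 1) :
    p.IsCovering := by
  refine ⟨fun _ => ⟨Classical.arbitrary G.V, Subsingleton.elim _ _⟩,
    fun v => ⟨fun _ _ => Subsingleton.elim _ _, fun e he e' he' hee' => ?_, fun a _ => ?_⟩⟩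
  · have h : e' ∈ p.liftsFrom {v} (p.toE e) := mem_liftsFrom.2 ⟨mem_singleton.2 he', hee'.symm⟩
    rw [liftsFrom_eq_singleton he (hmult v _), mem_singleton] at h
    exact h.symm
  · obtain ⟨e, he, rfl⟩ := exists_of_one_le_mult (hmult v a).ge
    exact ⟨e, he, rfl⟩

lemma isTwoSheetedCovering_of_closed [Fintype G.V] (hconn : G.Connected) {W : Finset G.V}
    (hW : #W = 2) (hmult : ∀ v ∈ W, ∀ a, p.mult v a = 1)
    (hclosed : ∀ e, G.ini e ∈ W → G.ter e ∈ W) : p.IsTwoSheetedCovering := by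
  have hWuniv : W = univ := coe_eq_univ.1 <|
    hconn.eq_univ_of_ter_mem (coe_nonempty.2 (card_pos.1 (by omega))) hclosed
  have : Nonempty G.V := hconn.1
  refine ⟨isCovering_of_mult_eq_one fun v => hmult v (hWuniv ▸ mem_univ v), fun x => ?_⟩
  rw [Nat.card_congr (Equiv.subtypeUnivEquiv fun u => Subsingleton.elim (p.toV u) x),
    Nat.card_eq_fintype_card, ← card_univ, ← hWuniv, hW]

lemma IsLiftState.mul_minLiftCard_add_card_le {Q : Finset G.E} {ℓ : (Rose n).E}
    (h : p.IsLiftState Q ℓ) :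
    (2 * n - 1) * p.minLiftCard + #Q ≤ ∑ v ∈ Q.image G.ter, G.degree v := by
  have hmin := card_nsmul_le_sum (univ.erase ((Rose n).bar ℓ)) _ _ fun b hb =>
    (h.liftsFrom (ne_of_mem_erase hb) rfl).minLiftCard_le
  rw [Rose.card_univ_erase, smul_eq_mul] at hmin
  have := card_add_sum_card_liftsFrom_le fun ε hε => h.toE_eq hε
  omega

lemma minLiftCard_le_two [Fintype G.V] (hn : 2 ≤ n) (hcore : ∀ v, 2 ≤ G.degree v)
    (hX : G.excess ≤ 4 * n - 4) : p.minLiftCard ≤ 2 := by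
  have : Nonempty (Rose n).E := ⟨(⟨0, by omega⟩, true)⟩
  obtain ⟨Q, ℓ, hQ, hcard⟩ := exists_isLiftState_card_eq_minLiftCard (p := p)
  have hchain := hQ.mul_minLiftCard_add_card_le
  have hbudget : ∑ v ∈ Q.image G.ter, G.degree v ≤ 2 * #(Q.image G.ter) + G.excess :=
    (le_add_right le_rfl).trans_eq (G.sum_degree_add_sum_compl hcore _)
  have hT : #(Q.image G.ter) ≤ #Q := card_image_le
  rw [hcard] at hchain hT
  obtain ⟨k, rfl⟩ : ∃ k, n = k + 2 := ⟨n - 2, by omega⟩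
  rw [show 2 * (k + 2) - 1 = 2 * k + 3 by omega] at hchain
  rw [show 4 * (k + 2) - 4 = 4 * k + 4 by omega] at hX
  by_contra! h3
  nlinarith [Nat.mul_le_mul_left (2 * k + 2) h3]

/-! ### Uniquely liftable words -/

namespace IsLiftState

variable {ε : G.E} {ℓ : (Rose n).E}

lemma two_mul_le_degree (hps : p.PathSurjective) (h : p.IsLiftState {ε} ℓ) :
    2 * n ≤ G.degree (G.ter ε) := by
  have : Nonempty (Rose n).E := ⟨ℓ⟩
  have hm : 2 * n - 1 ≤ (2 * n - 1) * p.minLiftCard :=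
    Nat.le_mul_of_pos_right _ (one_le_minLiftCard hps)
  have := h.mul_minLiftCard_add_card_le
  rw [image_singleton, sum_singleton, card_singleton] at this
  omega

lemma one_le_mult (hps : p.PathSurjective) (h : p.IsLiftState {ε} ℓ) (a : (Rose n).E) :
    1 ≤ p.mult (G.ter ε) a := by
  by_cases ha : a = (Rose n).bar ℓ
  · exact ha ▸ h.one_le_mult_bar (mem_image_of_mem _ (mem_singleton_self ε))
  · have := (h.liftsFrom ha rfl).nonempty hps
    rw [image_singleton] at this
    exact card_pos.2 this

lemma singleton_of_mult_eq_one (h : p.IsLiftState {ε} ℓ) {α : G.E} (hα : G.ini α = G.ter ε)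
    (hb : p.toE α ≠ (Rose n).bar ℓ) (h1 : p.mult (G.ter ε) (p.toE α) = 1) :
    p.IsLiftState {α} (p.toE α) := by
  have := h.liftsFrom hb rfl
  rwa [image_singleton, liftsFrom_eq_singleton hα h1] at this

section EndsInSet

variable {W : Finset G.V}
  (hW : ∀ ε ℓ, p.IsLiftState {ε} ℓ → G.ter ε ∈ W ∧ ∀ a, p.mult (G.ter ε) a = 1)
include hW

lemma singleton_of_ne_bar (h : p.IsLiftState {ε} ℓ) {α : G.E} (hα : G.ini α = G.ter ε)
    (hb : p.toE α ≠ (Rose n).bar ℓ) : p.IsLiftState {α} (p.toE α) :=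
  h.singleton_of_mult_eq_one hα hb ((hW ε ℓ h).2 _)

lemma ter_mem_of_ini_mem (h : p.IsLiftState {ε} ℓ) (hini : G.ini ε ∈ W) {α : G.E}
    (hα : G.ini α = G.ter ε) : G.ter α ∈ W := by
  by_cases hb : p.toE α = (Rose n).bar ℓ
  · rwa [h.eq_bar_of_mult_eq_one hα hb ((hW ε ℓ h).2 _), MGraph.ter_bar]
  · exact (hW α _ (singleton_of_ne_bar hW h hα hb)).1

end EndsInSet

variable [Fintype G.V]

/-- Reading a letter with no loop at `u = ter ε` moves all lifts away from `u`, and the excess of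
`u` is then missing from the degree budget of their ends. -/
lemma degree_lt_of_forall_ter_ne (hps : p.PathSurjective) (hcore : ∀ v, 2 ≤ G.degree v)
    (hX : G.excess ≤ 4 * n - 4) (h : p.IsLiftState {ε} ℓ) {b : (Rose n).E}
    (hb : b ≠ (Rose n).bar ℓ)
    (hnl : ∀ e, G.ini e = G.ter ε → p.toE e = b → G.ter e ≠ G.ter ε) :
    G.degree (G.ter ε) < p.mult (G.ter ε) b + 2 * n := by
  have : Nonempty (Rose n).E := ⟨ℓ⟩
  have hQ := h.liftsFrom hb rfl
  rw [image_singleton] at hQ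
  have hchain := hQ.mul_minLiftCard_add_card_le
  have hm : 2 * n - 1 ≤ (2 * n - 1) * p.minLiftCard :=
    Nat.le_mul_of_pos_right _ (one_le_minLiftCard hps)
  have hu : G.ter ε ∈ ((p.liftsFrom {G.ter ε} b).image G.ter)ᶜ := by
    simp only [mem_compl, mem_image, mem_liftsFrom, mem_singleton, not_exists, not_and]
    exact fun e he => hnl e he.1 he.2
  have hbudget := G.sum_degree_add_sum_compl hcore ((p.liftsFrom {G.ter ε} b).image G.ter)
  have hexcess := G.degree_sub_two_le_sum hu
  have hT : #((p.liftsFrom {G.ter ε} b).image G.ter) ≤ #(p.liftsFrom {G.ter ε} b) :=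
    card_image_le
  have := hcore (G.ter ε)
  have := ℓ.1.pos
  rw [mult]
  omega

section OneEnd

variable {ε₀ : G.E} {ℓ₀ : (Rose n).E}
  (hends : ∀ ε ℓ, p.IsLiftState {ε} ℓ → G.ter ε = G.ter ε₀)
include hends

lemma exists_loop_of_mult_eq_one (hps : p.PathSurjective) (hX : G.excess ≤ 4 * n - 4)
    (h₀ : p.IsLiftState {ε₀} ℓ₀) {a : (Rose n).E} (ha : p.mult (G.ter ε₀) a = 1) :
    ∃ e, G.ini e = G.ter ε₀ ∧ G.ter e = G.ter ε₀ ∧ p.toE e = a := by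
  have hfull := h₀.one_le_mult hps
  have hdeg : G.degree (G.ter ε₀) - 2 ≤ G.excess := G.degree_sub_two_le_sum (mem_univ _)
  obtain ⟨c, hc, hc1⟩ :=
    exists_ne_mult_eq_one hfull (by have := ℓ₀.1.pos; omega) ((Rose n).bar ℓ₀)
  obtain ⟨α, hα, rfl⟩ := exists_of_one_le_mult hc1.ge
  have h₁ := h₀.singleton_of_mult_eq_one hα hc hc1
  have hαu : G.ter α = G.ter ε₀ := hends _ _ h₁
  by_cases hac : a = (Rose n).bar (p.toE α)
  · exact ⟨G.bar α, hαu, by rw [MGraph.ter_bar, hα], by rw [p.map_bar, hac]⟩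
  · obtain ⟨e, he, rfl⟩ := exists_of_one_le_mult ha.ge
    exact ⟨e, he, hends _ _ (h₁.singleton_of_mult_eq_one (he.trans hαu.symm) hac (hαu ▸ ha)),
      rfl⟩

lemma exists_section (hps : p.PathSurjective) (hcore : ∀ v, 2 ≤ G.degree v)
    (hX : G.excess ≤ 4 * n - 4) (h₀ : p.IsLiftState {ε₀} ℓ₀) :
    ∃ f : MGraphHom (Rose n) G, (∀ x, p.toV (f.toV x) = x) ∧ ∀ e, p.toE (f.toE e) = e := by
  refine exists_section_of_loops (G.ter ε₀) fun i => ?_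
  by_contra! hnone
  have hnl : ∀ e, G.ini e = G.ter ε₀ → G.ter e = G.ter ε₀ → (p.toE e).1 ≠ i := by
    intro e hini hter hi
    have hlabel : p.toE e = (i, (p.toE e).2) := by rw [← hi]; rfl
    cases hs : (p.toE e).2 <;> rw [hs] at hlabel
    · exact hnone (G.bar e) hter (by simpa using hini) (by rw [p.map_bar, hlabel]; rfl)
    · exact hnone e hini hter hlabel
  have hmult : ∀ c : (Rose n).E, c.1 = i → 2 ≤ p.mult (G.ter ε₀) c := fun c hc => by
    have := h₀.one_le_mult hps c
    have : p.mult (G.ter ε₀) c ≠ 1 := fun h1 => by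
      obtain ⟨e, hini, hter, hlabel⟩ := exists_loop_of_mult_eq_one hends hps hX h₀ h1
      exact hnl e hini hter (hlabel ▸ hc)
    omega
  obtain ⟨c, hci, hc⟩ : ∃ c : (Rose n).E, c.1 = i ∧ c ≠ (Rose n).bar ℓ₀ := by
    by_cases h : ((i, true) : (Rose n).E) = (Rose n).bar ℓ₀
    · refine ⟨(i, false), rfl, fun h' => ?_⟩
      have := congrArg (fun x : Fin n × Bool => x.2) (h.trans h'.symm)
      simp at this
    · exact ⟨(i, true), rfl, h⟩
  have hlt := h₀.degree_lt_of_forall_ter_ne hps hcore hX hc fun e hini hlabel hter =>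
    hnl e hini hter (hlabel ▸ hci)
  have hpair := sum_le_sum_of_subset (f := fun c => p.mult (G.ter ε₀) c - 1)
    (subset_univ {c, (Rose n).bar c})
  rw [sum_pair ((Rose n).bar_ne c).symm, sum_mult_sub_one (h₀.one_le_mult hps)] at hpair
  have := hmult ((Rose n).bar c) hci
  omega

end OneEnd

end IsLiftState

end

variable [Fintype G.V] [Fintype G.E]

section TwoEnds

variable {ε₀ ε₁ : G.E} {ℓ₀ ℓ₁ : (Rose n).E}

/-- Two singleton lift states with distinct ends use up the whole excess budget. -/
lemma IsLiftState.ter_mem_pair_and_mult_eq_one (hps : p.PathSurjective) (hn : 2 ≤ n)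
    (hcore : ∀ v, 2 ≤ G.degree v) (hX : G.excess ≤ 4 * n - 4) {ε : G.E} {ℓ : (Rose n).E}
    (h : p.IsLiftState {ε} ℓ) (h₀ : p.IsLiftState {ε₀} ℓ₀) (h₁ : p.IsLiftState {ε₁} ℓ₁)
    (hne : G.ter ε₀ ≠ G.ter ε₁) :
    G.ter ε ∈ ({G.ter ε₀, G.ter ε₁} : Finset G.V) ∧ ∀ a, p.mult (G.ter ε) a = 1 := by
  have hbudget := G.sum_degree_add_sum_compl hcore {G.ter ε₀, G.ter ε₁}
  rw [sum_pair hne, card_pair hne] at hbudget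
  have := h₀.two_mul_le_degree hps
  have := h₁.two_mul_le_degree hps
  have := h.two_mul_le_degree hps
  have hmem : G.ter ε ∈ ({G.ter ε₀, G.ter ε₁} : Finset G.V) := by
    by_contra hout
    have := G.degree_sub_two_le_sum (mem_compl.2 hout)
    omega
  refine ⟨hmem, mult_eq_one_of_degree_le (h.one_le_mult hps) ?_⟩
  rcases mem_insert.1 hmem with hε | hε
  · rw [hε]; omega
  · rw [mem_singleton.1 hε]; omega

lemma isTwoSheetedCovering_of_ter_ne (hps : p.PathSurjective) (hn : 2 ≤ n)
    (hconn : G.Connected) (hcore : ∀ v, 2 ≤ G.degree v) (hX : G.excess ≤ 4 * n - 4)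
    (h₀ : p.IsLiftState {ε₀} ℓ₀) (h₁ : p.IsLiftState {ε₁} ℓ₁) (hne : G.ter ε₀ ≠ G.ter ε₁) :
    p.IsTwoSheetedCovering := by
  set W : Finset G.V := {G.ter ε₀, G.ter ε₁}
  have hW : ∀ ε ℓ, p.IsLiftState {ε} ℓ → G.ter ε ∈ W ∧ ∀ a, p.mult (G.ter ε) a = 1 :=
    fun _ _ h => h.ter_mem_pair_and_mult_eq_one hps hn hcore hX h₀ h₁ hne
  -- Arcs from the end of a singleton state that starts in `W` stay in `W` (`ter_mem_of_ini_mem`).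
  let Good (v : G.V) : Prop := ∃ δ ℓ, p.IsLiftState {δ} ℓ ∧ G.ini δ ∈ W ∧ G.ter δ = v
  obtain ⟨α₁, hα₁, hα₁ℓ⟩ := exists_of_one_le_mult ((hW _ _ h₀).2 ℓ₀).ge
  have hℓ₀ : ℓ₀ ≠ (Rose n).bar ℓ₀ := ((Rose n).bar_ne ℓ₀).symm
  have h₁' := hα₁ℓ ▸ h₀.singleton_of_ne_bar hW hα₁ (hα₁ℓ ▸ hℓ₀)
  obtain ⟨α₂, hα₂, hα₂ℓ⟩ := exists_of_one_le_mult ((hW _ _ h₁').2 ℓ₀).ge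
  have h₂ := hα₂ℓ ▸ h₁'.singleton_of_ne_bar hW hα₂ (hα₂ℓ ▸ hℓ₀)
  have hα₂W : G.ini α₂ ∈ W := hα₂ ▸ (hW _ _ h₁').1
  obtain ⟨β, hβ, hβne⟩ : ∃ β, G.ini β = G.ter α₂ ∧ G.ter β ≠ G.ter α₂ := by
    by_contra! hloops
    have huniv := hconn.eq_univ_of_ter_mem (S := {G.ter α₂}) ⟨_, rfl⟩
      fun e he => hloops e he
    have h0 := huniv ▸ Set.mem_univ (G.ter ε₀)
    have h1 := huniv ▸ Set.mem_univ (G.ter ε₁)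
    exact hne (h0.trans h1.symm)
  have hgoodβ : Good (G.ter β) := by
    by_cases hb : p.toE β = (Rose n).bar ℓ₀
    · refine ⟨α₁, ℓ₀, h₁', hα₁ ▸ (hW _ _ h₀).1, ?_⟩
      rw [h₂.eq_bar_of_mult_eq_one hβ hb ((hW _ _ h₂).2 _), MGraph.ter_bar, hα₂]
    · exact ⟨β, _, h₂.singleton_of_ne_bar hW hβ hb, hβ ▸ (hW _ _ h₂).1, rfl⟩
  have hgood : ∀ v ∈ W, Good v := by
    have hsub : {G.ter α₂, G.ter β} ⊆ W := by
      obtain ⟨δ, ℓ, hδ, -, hδβ⟩ := hgoodβ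
      exact insert_subset (hW _ _ h₂).1 (singleton_subset_iff.2 (hδβ ▸ (hW _ _ hδ).1))
    rw [← eq_of_subset_of_card_le hsub (by rw [card_pair hne, card_pair hβne.symm])]
    simp only [mem_insert, mem_singleton, forall_eq_or_imp, forall_eq]
    exact ⟨⟨α₂, ℓ₀, h₂, hα₂W, rfl⟩, hgoodβ⟩
  refine isTwoSheetedCovering_of_closed hconn (card_pair hne) (fun v hv => ?_) fun e he => ?_
  · obtain ⟨δ, ℓ, hδ, -, hδv⟩ := hgood v hv
    exact hδv ▸ (hW _ _ hδ).2
  · obtain ⟨δ, ℓ, hδ, hδW, hδe⟩ := hgood _ he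
    exact hδ.ter_mem_of_ini_mem hW hδW hδe.symm

end TwoEnds

/-! ### Minimal lift states of size two -/

section MinLiftCardTwo

variable {Q : Finset G.E} {ℓ : (Rose n).E} (hcore : ∀ v, 2 ≤ G.degree v)
  (hX : G.excess ≤ 4 * n - 4) (hm : p.minLiftCard = 2)
include hcore hX hm

/-- A lift state of the minimal size `2` makes every estimate of the degree budget an equality. -/
lemma IsLiftState.sum_degree_eq (h : p.IsLiftState Q ℓ) (hQ : #Q = 2) :
    #(Q.image G.ter) = 2 ∧ ∑ v ∈ Q.image G.ter, G.degree v = 4 * n ∧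
      ∀ v ∉ Q.image G.ter, G.degree v = 2 := by
  have hchain := h.mul_minLiftCard_add_card_le
  have hbudget := G.sum_degree_add_sum_compl hcore (Q.image G.ter)
  have hT : #(Q.image G.ter) ≤ 2 := hQ ▸ card_image_le
  have := ℓ.1.pos
  rw [hm, hQ] at hchain
  refine ⟨by omega, by omega, fun v hv => ?_⟩
  have := G.degree_sub_two_le_sum (mem_compl.2 hv)
  have := hcore v
  omega

lemma IsLiftState.card_liftsFrom_eq_two (h : p.IsLiftState Q ℓ) (hQ : #Q = 2) {b : (Rose n).E}
    (hb : b ≠ (Rose n).bar ℓ) : #(p.liftsFrom (Q.image G.ter) b) = 2 := by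
  have hmin : ∀ c ∈ univ.erase ((Rose n).bar ℓ), 2 ≤ #(p.liftsFrom (Q.image G.ter) c) :=
    fun c hc => hm ▸ (h.liftsFrom (ne_of_mem_erase hc) rfl).minLiftCard_le
  have hb' : b ∈ univ.erase ((Rose n).bar ℓ) := mem_erase.2 ⟨hb, mem_univ b⟩
  have hrest := card_nsmul_le_sum ((univ.erase ((Rose n).bar ℓ)).erase b) _ _ fun c hc =>
    hmin c (mem_of_mem_erase hc)
  rw [card_erase_of_mem hb', Rose.card_univ_erase, smul_eq_mul] at hrest
  have hkcl := card_add_sum_card_liftsFrom_le fun ε hε => h.toE_eq hε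
  rw [← add_sum_erase _ _ hb', (h.sum_degree_eq hcore hX hm hQ).2.1, hQ] at hkcl
  have := hmin b hb'
  have := ℓ.1.pos
  omega

lemma IsLiftState.mult_bar_eq_one (h : p.IsLiftState Q ℓ) (hQ : #Q = 2) {v : G.V}
    (hv : v ∈ Q.image G.ter) : p.mult v ((Rose n).bar ℓ) = 1 := by
  obtain ⟨hT, hsum, -⟩ := h.sum_degree_eq hcore hX hm hQ
  have hrest :
      ∑ b ∈ univ.erase ((Rose n).bar ℓ), #(p.liftsFrom (Q.image G.ter) b) = 2 * (2 * n - 1) := by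
    rw [sum_congr rfl fun b hb => h.card_liftsFrom_eq_two hcore hX hm hQ (ne_of_mem_erase hb),
      sum_const, Rose.card_univ_erase, smul_eq_mul, mul_comm]
  have htotal := sum_card_liftsFrom (p := p) (Q.image G.ter)
  rw [← add_sum_erase _ _ (mem_univ ((Rose n).bar ℓ)), hrest, hsum, card_liftsFrom,
    ← add_sum_erase _ _ hv] at htotal
  have hother := card_nsmul_le_sum ((Q.image G.ter).erase v) _ _ fun w hw =>
    h.one_le_mult_bar (mem_of_mem_erase hw)
  rw [card_erase_of_mem hv, hT, smul_eq_mul] at hother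
  have := h.one_le_mult_bar hv
  have := ℓ.1.pos
  omega

lemma IsLiftState.branchVertices_subset (h : p.IsLiftState Q ℓ) (hQ : #Q = 2) :
    G.branchVertices ⊆ Q.image G.ter := fun v hv => by
  by_contra hvT
  have := (h.sum_degree_eq hcore hX hm hQ).2.2 v hvT
  simp only [MGraph.branchVertices, mem_filter, mem_univ, true_and] at hv
  omega

variable (hn : 2 ≤ n)
include hn

lemma exists_isLiftState_card_eq_two (c : (Rose n).E) : ∃ Q, p.IsLiftState Q c ∧ #Q = 2 := by
  have : Nonempty (Rose n).E := ⟨c⟩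
  obtain ⟨Q₀, ℓ₀, h₀, hQ₀⟩ := exists_isLiftState_card_eq_minLiftCard (p := p)
  rw [hm] at hQ₀
  obtain ⟨b, hb⟩ : ((univ.erase ((Rose n).bar ℓ₀)).erase ((Rose n).bar c)).Nonempty := by
    rw [← card_pos]
    have := pred_card_le_card_erase (s := univ.erase ((Rose n).bar ℓ₀)) (a := (Rose n).bar c)
    rw [Rose.card_univ_erase] at this
    omega
  have hb₀ : b ≠ (Rose n).bar ℓ₀ := ne_of_mem_erase (mem_of_mem_erase hb)
  have hcb : c ≠ (Rose n).bar b := fun hcb => ne_of_mem_erase hb (by rw [hcb, (Rose n).bar_bar])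
  have h₁ := h₀.liftsFrom hb₀ rfl
  have hQ₁ := h₀.card_liftsFrom_eq_two hcore hX hm hQ₀ hb₀
  exact ⟨_, h₁.liftsFrom hcb rfl, h₁.card_liftsFrom_eq_two hcore hX hm hQ₁ hcb⟩

lemma mult_eq_one_of_mem_branchVertices {v : G.V} (hv : v ∈ G.branchVertices)
    (a : (Rose n).E) : p.mult v a = 1 := by
  obtain ⟨Q, h, hQ⟩ := exists_isLiftState_card_eq_two hcore hX hm hn ((Rose n).bar a)
  simpa only [(Rose n).bar_bar] using
    h.mult_bar_eq_one hcore hX hm hQ (h.branchVertices_subset hcore hX hm hQ hv)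

/-- A branch vertex has degree `2n`, and the two ends have total degree `4n`. -/
lemma IsLiftState.image_ter_eq_branchVertices (h : p.IsLiftState Q ℓ) (hQ : #Q = 2) :
    Q.image G.ter = G.branchVertices := by
  obtain ⟨hT, hsum, -⟩ := h.sum_degree_eq hcore hX hm hQ
  have hdeg : ∀ v, 3 ≤ G.degree v → G.degree v = 2 * n := fun v hv => by
    have hmult := mult_eq_one_of_mem_branchVertices hcore hX hm hn (p := p)
      (by simpa [MGraph.branchVertices] using hv)
    rw [← sum_mult (p := p), sum_congr rfl fun a _ => hmult a, sum_const, card_univ,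
      Rose.card_E, smul_eq_mul, mul_one]
  refine Subset.antisymm ?_ (h.branchVertices_subset hcore hX hm hQ)
  obtain ⟨x, y, hxy, hxyT⟩ := card_eq_two.1 hT
  rw [hxyT, sum_pair hxy] at hsum
  have := hdeg x
  have := hdeg y
  rw [hxyT, insert_subset_iff, singleton_subset_iff]
  simp only [MGraph.branchVertices, mem_filter, mem_univ, true_and]
  omega

lemma isTwoSheetedCovering_of_minLiftCard_eq_two (hconn : G.Connected) :
    p.IsTwoSheetedCovering := by
  obtain ⟨Q₀, h₀, hQ₀⟩ :=
    exists_isLiftState_card_eq_two hcore hX hm hn (p := p) (⟨0, by omega⟩, true)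
  refine isTwoSheetedCovering_of_closed hconn ?_
    (fun v hv => mult_eq_one_of_mem_branchVertices hcore hX hm hn hv) fun e he => ?_
  · rw [← h₀.image_ter_eq_branchVertices hcore hX hm hn hQ₀]
    exact (h₀.sum_degree_eq hcore hX hm hQ₀).1
  obtain ⟨Q, h, hQ⟩ := exists_isLiftState_card_eq_two hcore hX hm hn (p := p) (p.toE e)
  have hbar : p.toE e ≠ (Rose n).bar (p.toE e) := ((Rose n).bar_ne _).symm
  have h' := h.liftsFrom hbar rfl
  rw [← h'.image_ter_eq_branchVertices hcore hX hm hn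
    (h.card_liftsFrom_eq_two hcore hX hm hQ hbar)]
  refine mem_image_of_mem _ (mem_liftsFrom.2 ⟨?_, rfl⟩)
  rwa [h.image_ter_eq_branchVertices hcore hX hm hn hQ]

end MinLiftCardTwo

lemma isTwoSheetedCovering_of_isLiftState_singleton (hps : p.PathSurjective) (hn : 2 ≤ n)
    (hconn : G.Connected) (hcore : ∀ v, 2 ≤ G.degree v) (hX : G.excess ≤ 4 * n - 4)
    (hnolift : ¬ ∃ f : MGraphHom (Rose n) G,
      (∀ x, p.toV (f.toV x) = x) ∧ (∀ e, p.toE (f.toE e) = e))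
    {ε₀ : G.E} {ℓ₀ : (Rose n).E} (h₀ : p.IsLiftState {ε₀} ℓ₀) : p.IsTwoSheetedCovering := by
  by_cases hends : ∀ ε ℓ, p.IsLiftState {ε} ℓ → G.ter ε = G.ter ε₀
  · exact absurd (h₀.exists_section hends hps hcore hX) hnolift
  · push Not at hends
    obtain ⟨ε₁, ℓ₁, h₁, hne⟩ := hends
    exact isTwoSheetedCovering_of_ter_ne hps hn hconn hcore hX h₀ h₁ (Ne.symm hne)

end MGraphHom

/-- a path-surjective morphism from a finite connected core graph
of Betti number at most `2n-1` to the rose `R_n` (with `n ≥ 2`), such that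
`R_n` does not lift, is a 2-sheeted covering map. -/
theorem path_surjective_is_two_sheeted_cover (n : ℕ) (hn : 2 ≤ n)
    (G : MGraph) [Finite G.V] [Finite G.E]
    (hconn : G.Connected) (hcore : ∀ v : G.V, 2 ≤ G.degree v)
    (p : MGraphHom G (Rose n)) (hps : p.PathSurjective)
    (hnolift : ¬ ∃ f : MGraphHom (Rose n) G,
      (∀ x, p.toV (f.toV x) = x) ∧ (∀ e, p.toE (f.toE e) = e))
    (hb : G.betti ≤ 2 * (n : ℤ) - 1) :
    p.IsCovering ∧ ∀ v : (Rose n).V, Nat.card {u : G.V // p.toV u = v} = 2 := by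
  have := Fintype.ofFinite G.V
  have := Fintype.ofFinite G.E
  have hX : G.excess ≤ 4 * n - 4 := by
    have := hconn.excess_eq hcore
    omega
  have : Nonempty (Rose n).E := ⟨(⟨0, by omega⟩, true)⟩
  obtain ⟨Q, ℓ, hQ, hcard⟩ := MGraphHom.exists_isLiftState_card_eq_minLiftCard (p := p)
  have := MGraphHom.one_le_minLiftCard hps
  have := MGraphHom.minLiftCard_le_two (p := p) hn hcore hX
  obtain hm | hm : p.minLiftCard = 1 ∨ p.minLiftCard = 2 := by omega
  · obtain ⟨ε, rfl⟩ := Finset.card_eq_one.1 (hcard.trans hm)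
    exact MGraphHom.isTwoSheetedCovering_of_isLiftState_singleton hps hn hconn hcore hX hnolift hQ
  · exact MGraphHom.isTwoSheetedCovering_of_minLiftCard_eq_two hcore hX hm hn hconn
end

section
/- Let n ≥ 2 and let p : Γ → R_n be a path-surjective morphism from a finite graph Γ. For each petal e of R_n let Γ_e be the subgraph of Γ consisting of edges mapping to e^{±1}. Then: (1) b(Γ_e) ≥ 1 for every petal e; and (2) if additionally b(Γ) ≤ 2n − 1, then there exists a petal e with b(Γ_e) = 1. -/
/-- The subgraph `Γ_S` of `Γ` spanned by the edges mapping into the set `S` of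
petals of the rose (together with all vertices of `Γ`; isolated vertices do not
affect the Betti number). -/
def petalSub {n : ℕ} (G : MGraph) (p : MGraphHom G (Rose n)) (S : Set (Fin n)) : MGraph where
  V := G.V
  E := {e : G.E // (p.toE e).1 ∈ S}
  bar e := ⟨G.bar e.1, by rw [p.map_bar]; exact e.2⟩
  bar_bar e := Subtype.ext (G.bar_bar e.1)
  bar_ne e h := G.bar_ne e.1 (congrArg Subtype.val h)
  ini e := G.ini e.1

/-! Measure a set `A` of oriented edges by `b(A) = |A| - |V| + c(A)`, where `c(A)` counts the
components spanned by `A`; with `A` one orientation of each edge of a subgraph this is the Betti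
number of that subgraph. Adding an edge raises `b` by one if its ends are already connected and
leaves it unchanged otherwise (it then merges two components), so `b` is nonnegative and
superadditive on disjoint edge sets.

The reduced path `e_i^(|V|+1)` lifts to a walk of length `|V| + 1` that uses only edges over
`e_i`, never over `e_i⁻¹`. It repeats a vertex, and a closed walk contains an edge whose ends are
connected by the remaining edges of the walk, so `b(Γ_{e_i}) ≥ 1`. If every petal had
`b(Γ_{e_i}) ≥ 2`, superadditivity over the petals would give `b(Γ) ≥ 2n`. -/

open Function Relation

theorem Relation.EqvGen.setoid_or_eq_of_rel {α : Type*} {r : α → α → Prop} {u v : α}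
    (h : EqvGen r u v) :
    EqvGen.setoid (fun x y => x = u ∧ y = v ∨ r x y) = EqvGen.setoid r := by
  refine le_antisymm (Setoid.eqvGen_le ?_) (Setoid.eqvGen_mono fun _ _ => Or.inr)
  rintro x y (⟨rfl, rfl⟩ | hxy)
  exacts [h, .rel _ _ hxy]

theorem Relation.EqvGen.card_quotient_setoid_or_add_one {α : Type*} [Finite α]
    {r : α → α → Prop} {u v : α} (h : ¬EqvGen r u v) :
    Nat.card (Quotient (EqvGen.setoid fun x y => x = u ∧ y = v ∨ r x y)) + 1 =
      Nat.card (Quotient (EqvGen.setoid r)) := by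
  classical
  set s := EqvGen.setoid r
  set t := EqvGen.setoid fun x y => x = u ∧ y = v ∨ r x y
  have hst : s ≤ t := Setoid.eqvGen_mono fun _ _ => Or.inr
  have huv : t u v := .rel _ _ (.inl ⟨rfl, rfl⟩)
  let c : Quotient s → Quotient t := Quotient.map' id fun _ _ h => hst h
  -- `collapse` merges the class of `v` into that of `u` and is constant on `t`-classes, so `c`
  -- is injective away from `⟦v⟧`.
  let collapse (x : α) : Quotient s := if s x v then ⟦u⟧ else ⟦x⟧
  have ht : t ≤ Setoid.ker collapse := by
    refine Setoid.eqvGen_le ?_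
    rintro x y (⟨rfl, rfl⟩ | hxy)
    · simp [Setoid.ker_def, collapse]
    · have hxy : s x y := .rel _ _ hxy
      by_cases hx : s x v
      · simp [Setoid.ker_def, collapse, hx, s.trans (s.symm hxy) hx]
      · have hy : ¬s y v := fun hy => hx (s.trans hxy hy)
        simp [Setoid.ker_def, collapse, hx, hy, Quotient.sound hxy]
  have hinj : Set.InjOn c {⟦v⟧}ᶜ := by
    rintro ⟨x⟩ hx ⟨y⟩ hy hxy
    have hx : ¬s x v := fun h => hx (Quotient.sound h)
    have hy : ¬s y v := fun h => hy (Quotient.sound h)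
    have hcol := ht (Quotient.exact hxy)
    simp only [Setoid.ker_def, collapse, id, hx, hy, if_false] at hcol
    exact hcol
  have himage : c '' {⟦v⟧}ᶜ = Set.univ := by
    refine Set.eq_univ_of_forall fun z => ?_
    induction z using Quotient.inductionOn with | h x => ?_
    by_cases hx : s x v
    · exact ⟨⟦u⟧, fun h' => h (Quotient.exact h'),
        Quotient.sound (t.trans huv (t.symm (hst hx)))⟩
    · exact ⟨⟦x⟧, fun h' => hx (Quotient.exact h'), rfl⟩
  rw [← Set.ncard_univ, ← himage, hinj.ncard_image, Set.ncard_compl, Set.ncard_singleton]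
  have : 0 < Nat.card (Quotient s) := Nat.card_pos_iff.2 ⟨⟨⟦v⟧⟩, inferInstance⟩
  omega

namespace MGraph

variable {G : MGraph}

def adjOn (G : MGraph) (A : Set G.E) (u v : G.V) : Prop :=
  ∃ e ∈ A, G.ini e = u ∧ G.ter e = v

def connOn (G : MGraph) (A : Set G.E) : Setoid G.V := EqvGen.setoid (G.adjOn A)

noncomputable def ncompOn (G : MGraph) (A : Set G.E) : ℕ := Nat.card (Quotient (G.connOn A))

/-- When `A` contains exactly one orientation of each edge of a subgraph, this is the first Betti
number of that subgraph (`betti_eq_bettiOn`). -/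
noncomputable def bettiOn (G : MGraph) (A : Set G.E) : ℤ :=
  A.ncard - Nat.card G.V + G.ncompOn A

theorem adjOn_insert (e : G.E) (A : Set G.E) :
    G.adjOn (insert e A) = fun x y => x = G.ini e ∧ y = G.ter e ∨ G.adjOn A x y := by
  ext x y
  simp only [adjOn, Set.mem_insert_iff, exists_eq_or_imp]
  constructor <;> rintro (⟨rfl, rfl⟩ | h) <;> simp_all

theorem connOn_mono {A B : Set G.E} (h : A ⊆ B) : G.connOn A ≤ G.connOn B :=
  Setoid.eqvGen_mono fun _ _ ⟨e, he, hu, hv⟩ => ⟨e, h he, hu, hv⟩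

theorem connOn_of_mem {A : Set G.E} {e : G.E} (he : e ∈ A) : G.connOn A (G.ini e) (G.ter e) :=
  .rel _ _ ⟨e, he, rfl, rfl⟩

theorem ncompOn_empty : G.ncompOn ∅ = Nat.card G.V := by
  have hbot : G.connOn ∅ ≤ ⊥ :=
    Setoid.eqvGen_le fun _ _ ⟨e, he, _⟩ => absurd he (Set.notMem_empty e)
  exact Nat.card_congr (Equiv.ofBijective _
    ⟨fun x y hxy => hbot (Quotient.exact hxy), Quotient.mk_surjective⟩).symm

theorem ncompOn_insert_of_rel {A : Set G.E} {e : G.E} (h : G.connOn A (G.ini e) (G.ter e)) :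
    G.ncompOn (insert e A) = G.ncompOn A := by
  rw [ncompOn, connOn, adjOn_insert, EqvGen.setoid_or_eq_of_rel h]
  rfl

theorem ncompOn_insert_add_one [Finite G.V] {A : Set G.E} {e : G.E}
    (h : ¬G.connOn A (G.ini e) (G.ter e)) : G.ncompOn (insert e A) + 1 = G.ncompOn A := by
  rw [ncompOn, connOn, adjOn_insert]
  exact EqvGen.card_quotient_setoid_or_add_one h

theorem bettiOn_empty : G.bettiOn ∅ = 0 := by
  simp [bettiOn, ncompOn_empty]

theorem bettiOn_insert_of_rel [Finite G.E] {A : Set G.E} {e : G.E} (he : e ∉ A)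
    (h : G.connOn A (G.ini e) (G.ter e)) : G.bettiOn (insert e A) = G.bettiOn A + 1 := by
  simp only [bettiOn, Set.ncard_insert_of_notMem he, ncompOn_insert_of_rel h]
  push_cast
  ring

theorem bettiOn_insert_of_not_rel [Finite G.V] [Finite G.E] {A : Set G.E} {e : G.E}
    (he : e ∉ A) (h : ¬G.connOn A (G.ini e) (G.ter e)) :
    G.bettiOn (insert e A) = G.bettiOn A := by
  have := ncompOn_insert_add_one h
  simp only [bettiOn, Set.ncard_insert_of_notMem he]
  omega

theorem bettiOn_insert_sub_le [Finite G.V] [Finite G.E] {A B : Set G.E} {e : G.E} (hAB : A ⊆ B)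
    (he : e ∉ B) :
    G.bettiOn (insert e A) - G.bettiOn A ≤ G.bettiOn (insert e B) - G.bettiOn B := by
  have heA : e ∉ A := fun h => he (hAB h)
  by_cases hA : G.connOn A (G.ini e) (G.ter e)
  · rw [bettiOn_insert_of_rel heA hA, bettiOn_insert_of_rel he (connOn_mono hAB hA)]
    omega
  · rw [bettiOn_insert_of_not_rel heA hA]
    by_cases hB : G.connOn B (G.ini e) (G.ter e)
    · rw [bettiOn_insert_of_rel he hB]; omega
    · rw [bettiOn_insert_of_not_rel he hB]; omega

theorem bettiOn_nonneg [Finite G.V] [Finite G.E] (A : Set G.E) : 0 ≤ G.bettiOn A := by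
  induction A, A.toFinite using Set.Finite.induction_on with
  | empty => exact bettiOn_empty.ge
  | @insert e A he _ ih =>
    by_cases h : G.connOn A (G.ini e) (G.ter e)
    · rw [bettiOn_insert_of_rel he h]; omega
    · rwa [bettiOn_insert_of_not_rel he h]

theorem bettiOn_add_le_bettiOn_union [Finite G.V] [Finite G.E] {A B : Set G.E}
    (hAB : Disjoint A B) : G.bettiOn A + G.bettiOn B ≤ G.bettiOn (A ∪ B) := by
  induction A, A.toFinite using Set.Finite.induction_on with
  | empty => simp [bettiOn_empty]
  | @insert e A he _ ih =>
    have heB : e ∉ B := Set.disjoint_left.1 hAB (Set.mem_insert e A)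
    have := ih (Set.disjoint_of_subset_left (Set.subset_insert e A) hAB)
    have := bettiOn_insert_sub_le (e := e) (B := A ∪ B) Set.subset_union_left
      (by simp [he, heB])
    rw [Set.insert_union]
    linarith

theorem sum_bettiOn_le_bettiOn_iUnion [Finite G.V] [Finite G.E] {ι : Type*} [Fintype ι]
    (A : ι → Set G.E) (hA : Pairwise (Disjoint on A)) :
    ∑ i, G.bettiOn (A i) ≤ G.bettiOn (⋃ i, A i) := by
  classical
  suffices ∀ s : Finset ι, ∑ i ∈ s, G.bettiOn (A i) ≤ G.bettiOn (⋃ i ∈ s, A i) by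
    simpa using this Finset.univ
  intro s
  induction s using Finset.induction_on with
  | empty => simp [bettiOn_empty]
  | @insert i s hi ih =>
    have hdisj : Disjoint (A i) (⋃ j ∈ s, A j) := by
      simp only [Set.disjoint_iUnion_right]
      exact fun j hj => hA (ne_of_mem_of_not_mem hj hi).symm
    rw [Finset.sum_insert hi, Finset.set_biUnion_insert]
    linarith [bettiOn_add_le_bettiOn_union hdisj]

theorem one_le_bettiOn_of_connOn_diff [Finite G.V] [Finite G.E] {A : Set G.E} {g : G.E}
    (hg : g ∈ A) (h : G.connOn (A \ {g}) (G.ini g) (G.ter g)) : 1 ≤ G.bettiOn A := by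
  rw [← Set.insert_sdiff_self_of_mem hg, bettiOn_insert_of_rel (by simp) h]
  linarith [bettiOn_nonneg (A \ {g})]

def IsWalk (G : MGraph) : G.V → List G.E → G.V → Prop
  | u, [], v => u = v
  | u, e :: β, v => G.ini e = u ∧ G.IsWalk (G.ter e) β v

theorem isWalk_append {u w : G.V} {β γ : List G.E} :
    G.IsWalk u (β ++ γ) w ↔ ∃ v, G.IsWalk u β v ∧ G.IsWalk v γ w := by
  induction β generalizing u with
  | nil => simp [IsWalk]
  | cons e β ih => simp [IsWalk, ih, and_assoc, exists_and_left]

theorem exists_isWalk_of_isChain {e : G.E} {β : List G.E} (h : G.IsChain (e :: β)) :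
    ∃ v, G.IsWalk (G.ini e) (e :: β) v := by
  induction β generalizing e with
  | nil => exact ⟨G.ter e, rfl, rfl⟩
  | cons f β ih =>
    rw [IsChain, List.Chain', List.isChain_cons_cons] at h
    obtain ⟨v, hv⟩ := ih h.2
    exact ⟨v, rfl, h.1 ▸ hv⟩

namespace IsWalk

variable {u v : G.V} {β : List G.E}

theorem connOn {A : Set G.E} (h : G.IsWalk u β v) (hβ : ∀ e ∈ β, e ∈ A) :
    G.connOn A u v := by
  induction β generalizing u with
  | nil => exact h ▸ (G.connOn A).refl u
  | cons e β ih =>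
    obtain ⟨rfl, h⟩ := h
    exact (G.connOn A).trans (connOn_of_mem (hβ e List.mem_cons_self))
      (ih h fun f hf => hβ f (List.mem_cons_of_mem e hf))

theorem exists_isWalk_of_mem (h : G.IsWalk u β v) {x : G.V} (hx : x ∈ u :: β.map G.ter) :
    ∃ γ ⊆ β, G.IsWalk u γ x := by
  induction β generalizing u with
  | nil => exact ⟨[], List.nil_subset _, (List.mem_singleton.1 hx).symm⟩
  | cons e β ih =>
    obtain ⟨rfl, h⟩ := h
    rcases List.mem_cons.1 hx with rfl | hx
    · exact ⟨[], List.nil_subset _, rfl⟩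
    · obtain ⟨γ, hγ, hw⟩ := ih h (by simpa using hx)
      exact ⟨e :: γ, List.cons_subset_cons _ hγ, rfl, hw⟩

theorem nodup_or_exists_closed (h : G.IsWalk u β v) :
    (u :: β.map G.ter).Nodup ∨ ∃ w γ, γ ≠ [] ∧ γ ⊆ β ∧ G.IsWalk w γ w := by
  induction β generalizing u with
  | nil => simp
  | cons e β ih =>
    obtain ⟨rfl, h⟩ := h
    rcases ih h with hnd | ⟨w, γ, hne, hγ, hw⟩
    · by_cases hmem : G.ini e ∈ G.ter e :: β.map G.ter
      · obtain ⟨γ, hγ, hw⟩ := h.exists_isWalk_of_mem hmem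
        exact .inr
          ⟨G.ini e, e :: γ, List.cons_ne_nil _ _, List.cons_subset_cons _ hγ, rfl, hw⟩
      · exact .inl (List.nodup_cons.2 ⟨hmem, hnd⟩)
    · exact .inr ⟨w, γ, hne, fun f hf => List.mem_cons_of_mem e (hγ hf), hw⟩

theorem exists_connOn_diff : ∀ {u : G.V} {γ : List G.E}, G.IsWalk u γ u → γ ≠ [] →
    ∃ g ∈ γ, G.connOn {f | f ∈ γ ∧ f ≠ g} (G.ini g) (G.ter g)
  | u, e :: γ, ⟨hu, h⟩, _ => by
    -- If the first edge `e` recurs, the walk up to its second occurrence is a shorter closed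
    -- walk; otherwise the rest of the walk joins the ends of `e`.
    by_cases he : e ∈ γ
    · obtain ⟨γ₁, γ₂, rfl⟩ := List.append_of_mem he
      obtain ⟨w, h₁, hw, -⟩ := isWalk_append.1 h
      have hsub : e :: γ₁ ⊆ e :: (γ₁ ++ e :: γ₂) :=
        List.cons_subset_cons _ (List.subset_append_left _ _)
      obtain ⟨g, hg, hconn⟩ :=
        exists_connOn_diff (γ := e :: γ₁) ⟨hu, hu ▸ hw ▸ h₁⟩ (List.cons_ne_nil _ _)
      refine ⟨g, hsub hg, connOn_mono ?_ hconn⟩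
      exact fun f hf => ⟨hsub hf.1, hf.2⟩
    · refine ⟨e, List.mem_cons_self, hu ▸ (G.connOn _).symm (h.connOn fun f hf => ?_)⟩
      exact ⟨List.mem_cons_of_mem e hf, fun hfe => he (hfe ▸ hf)⟩
termination_by _ γ => γ.length

theorem exists_connOn_diff_of_card_le [Finite G.V] (h : G.IsWalk u β v)
    (hβ : Nat.card G.V ≤ β.length) :
    ∃ g ∈ β, G.connOn {f | f ∈ β ∧ f ≠ g} (G.ini g) (G.ter g) := by
  rcases h.nodup_or_exists_closed with hnd | ⟨w, γ, hne, hγ, hw⟩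
  · have := Fintype.ofFinite G.V
    have := hnd.length_le_card
    simp only [List.length_cons, List.length_map, Nat.card_eq_fintype_card] at this hβ
    omega
  · obtain ⟨g, hg, hconn⟩ := hw.exists_connOn_diff hne
    refine ⟨g, hγ hg, connOn_mono ?_ hconn⟩
    exact fun f hf => ⟨hγ hf.1, hf.2⟩

end IsWalk

theorem card_edge_eq_two_mul_ncard [Finite G.E] {A : Set G.E}
    (hA : ∀ e, G.bar e ∈ A ↔ e ∉ A) : Nat.card G.E = 2 * A.ncard := by
  have hbar : Function.Injective G.bar := Function.Involutive.injective G.bar_bar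
  have hcompl : Aᶜ = G.bar ⁻¹' A := by ext e; simp [hA]
  rw [← Set.ncard_add_ncard_compl A, hcompl,
    Set.ncard_preimage_of_injective_subset_range hbar (fun e _ => ⟨G.bar e, G.bar_bar e⟩)]
  ring

theorem compSetoid_eq_connOn {A : Set G.E} (hA : ∀ e, G.bar e ∈ A ↔ e ∉ A) :
    G.compSetoid = G.connOn A := by
  refine le_antisymm (Setoid.eqvGen_le ?_)
    (Setoid.eqvGen_le fun x y ⟨e, _, hx, hy⟩ => .rel _ _ ⟨e, hx, hy⟩)
  rintro _ _ ⟨e, rfl, rfl⟩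
  by_cases he : e ∈ A
  · exact connOn_of_mem he
  · have := connOn_of_mem ((hA e).2 he)
    rw [ter, G.bar_bar] at this
    exact (G.connOn A).symm this

theorem betti_eq_bettiOn [Finite G.V] [Finite G.E] {A : Set G.E}
    (hA : ∀ e, G.bar e ∈ A ↔ e ∉ A) : G.betti = G.bettiOn A := by
  rw [betti, bettiOn, ncomp, ncompOn, card_edge_eq_two_mul_ncard hA, compSetoid_eq_connOn hA,
    Nat.mul_div_cancel_left _ two_pos]

end MGraph

namespace MGraphHom

variable {G : MGraph} {n : ℕ} (p : MGraphHom G (Rose n))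

def petalEdges (i : Fin n) : Set G.E := {e | p.toE e = (i, true)}

theorem bar_mem_petalEdges_iff {i : Fin n} {e : G.E} (he : (p.toE e).1 = i) :
    G.bar e ∈ p.petalEdges i ↔ e ∉ p.petalEdges i := by
  show p.toE (G.bar e) = (i, true) ↔ ¬p.toE e = (i, true)
  rw [p.map_bar]
  generalize p.toE e = x at he ⊢
  obtain ⟨j, b⟩ := x
  subst he
  cases b <;> simp [Rose]

theorem mem_iUnion_petalEdges {e : G.E} :
    e ∈ ⋃ i, p.petalEdges i ↔ e ∈ p.petalEdges (p.toE e).1 := by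
  simp only [Set.mem_iUnion]
  refine ⟨fun ⟨i, hi⟩ => ?_, fun h => ⟨_, h⟩⟩
  rwa [(congrArg Prod.fst hi : (p.toE e).1 = i)]

theorem pairwise_disjoint_petalEdges : Pairwise (Disjoint on p.petalEdges) := by
  intro i j hij
  exact Set.disjoint_left.2 fun e hi hj => hij (congrArg Prod.fst (hi.symm.trans hj))

theorem bettiOn_petalSub (S : Set (Fin n)) (A : Set (petalSub G p S).E) :
    (petalSub G p S).bettiOn A = G.bettiOn (Subtype.val '' A) := by
  have hadj : (petalSub G p S).adjOn A = G.adjOn (Subtype.val '' A) := by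
    ext u v
    constructor
    · rintro ⟨e, he, hu, hv⟩
      exact ⟨e.1, ⟨e, he, rfl⟩, hu, hv⟩
    · rintro ⟨_, ⟨e, he, rfl⟩, hu, hv⟩
      exact ⟨e, he, hu, hv⟩
  have hconn : (petalSub G p S).connOn A = G.connOn (Subtype.val '' A) :=
    congrArg EqvGen.setoid hadj
  have hcard : (Subtype.val '' A).ncard = A.ncard :=
    Set.ncard_image_of_injective A Subtype.val_injective
  unfold MGraph.bettiOn MGraph.ncompOn
  rw [hcard, hconn]
  rfl

theorem betti_petalSub [Finite G.V] [Finite G.E] (i : Fin n) :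
    (petalSub G p {i}).betti = G.bettiOn (p.petalEdges i) := by
  have : Finite (petalSub G p {i}).V := ‹Finite G.V›
  have : Finite (petalSub G p {i}).E := Subtype.finite
  rw [MGraph.betti_eq_bettiOn (A := Subtype.val ⁻¹' p.petalEdges i), bettiOn_petalSub]
  · congr 1
    exact Set.image_preimage_eq_of_subset fun e he => ⟨⟨e, congrArg Prod.fst he⟩, rfl⟩
  · exact fun e => p.bar_mem_petalEdges_iff e.2

theorem betti_eq_bettiOn_iUnion_petalEdges [Finite G.V] [Finite G.E] :
    G.betti = G.bettiOn (⋃ i, p.petalEdges i) := by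
  refine G.betti_eq_bettiOn fun e => ?_
  have hfst : (p.toE (G.bar e)).1 = (p.toE e).1 := by rw [p.map_bar]; rfl
  rw [mem_iUnion_petalEdges, mem_iUnion_petalEdges, hfst]
  exact p.bar_mem_petalEdges_iff rfl

theorem one_le_bettiOn_petalEdges [Finite G.V] [Finite G.E] (hps : p.PathSurjective)
    (i : Fin n) : 1 ≤ G.bettiOn (p.petalEdges i) := by
  obtain ⟨β, hchain, hmap⟩ := hps (List.replicate (Nat.card G.V + 1) (i, true))
    (List.isChain_replicate_of_rel _ ⟨rfl, by simp [Rose]⟩)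
  have hβ : ∀ e ∈ β, e ∈ p.petalEdges i := fun e he =>
    List.eq_of_mem_replicate (hmap ▸ List.mem_map_of_mem he)
  have hlen : β.length = Nat.card G.V + 1 := by
    rw [← List.length_map (f := p.toE), hmap]
    exact List.length_replicate
  obtain ⟨e, β, rfl⟩ := List.exists_cons_of_ne_nil (β.ne_nil_of_length_pos (by omega))
  obtain ⟨v, hw⟩ := MGraph.exists_isWalk_of_isChain hchain
  obtain ⟨g, hg, hconn⟩ := hw.exists_connOn_diff_of_card_le (hlen ▸ Nat.le_succ _)
  refine MGraph.one_le_bettiOn_of_connOn_diff (hβ g hg) (MGraph.connOn_mono ?_ hconn)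
  exact fun f hf => ⟨hβ f hf.1, hf.2⟩

end MGraphHom

theorem petal_betti_general (n : ℕ) (G : MGraph) [Finite G.V] [Finite G.E]
    (p : MGraphHom G (Rose n)) (hps : p.PathSurjective) :
    (∀ i : Fin n, 1 ≤ (petalSub G p {i}).betti) ∧
    (G.betti ≤ 2 * (n : ℤ) - 1 → ∃ i : Fin n, (petalSub G p {i}).betti = 1) := by
  simp only [p.betti_petalSub]
  refine ⟨p.one_le_bettiOn_petalEdges hps, fun hG => ?_⟩
  by_contra! h
  have hsum : ∑ _i : Fin n, (2 : ℤ) ≤ ∑ i, G.bettiOn (p.petalEdges i) :=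
    Finset.sum_le_sum fun i _ => lt_of_le_of_ne (p.one_le_bettiOn_petalEdges hps i) (h i).symm
  have hunion := G.sum_bettiOn_le_bettiOn_iUnion _ p.pairwise_disjoint_petalEdges
  rw [← p.betti_eq_bettiOn_iUnion_petalEdges] at hunion
  simp only [Finset.sum_const, Finset.card_univ, Fintype.card_fin, nsmul_eq_mul] at hsum
  linarith

/-- for a path-surjective morphism `p : Γ → R_n` from a finite
graph, every petal subgraph `Γ_e` has `b(Γ_e) ≥ 1`; and if moreover
`b(Γ) ≤ 2n-1` then some petal has `b(Γ_e) = 1`. -/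
theorem petal_betti (n : ℕ) (hn : 2 ≤ n) (G : MGraph) [Finite G.V] [Finite G.E]
    (p : MGraphHom G (Rose n)) (hps : p.PathSurjective) :
    (∀ i : Fin n, 1 ≤ (petalSub G p {i}).betti) ∧
    (G.betti ≤ 2 * (n : ℤ) - 1 → ∃ i : Fin n, (petalSub G p {i}).betti = 1) :=
  petal_betti_general n G p hps
end

section
/- Let w ∈ F(A) with c_1(w) = k and let w = w_1⋯w_k = w_1'⋯w_k' be two admissible decompositions of w (as reduced products of k U-words). Then for every i ∈ {1,…,k} the subwords w_i and w_i' of w overlap nontrivially. -/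
/-- A letter of `F(A)` with `A = Fin n`: a generator together with a sign. -/
abbrev Letter (n : ℕ) := Fin n × Bool

/-- A word over `A^{±1}`. -/
abbrev Wrd (n : ℕ) := List (Letter n)

/-- The inverse of a word. -/
def wInv {n : ℕ} (w : Wrd n) : Wrd n := (w.reverse).map (fun x => (x.1, !x.2))

/-- A freely reduced word: no adjacent cancelling pair. -/
def IsReducedW {n : ℕ} (w : Wrd n) : Prop :=
  List.Chain' (fun x y => y ≠ (x.1, !x.2)) w

/-- A `U`-word: a subword of a power of some relator `U_i^{±1}`. -/
def IsUword {n m : ℕ} (U : Fin m → Wrd n) (w : Wrd n) : Prop :=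
  ∃ (i : Fin m) (k : ℕ),
    w <:+: (List.replicate k (U i)).flatten ∨ w <:+: (List.replicate k (wInv (U i))).flatten

/-- A decomposition of `w` as a reduced product of nonempty `U`-words, recorded
together with the positions of the factors. -/
def IsUDecomp {n m : ℕ} (U : Fin m → Wrd n) (w : Wrd n) (d : List (Wrd n)) : Prop :=
  d.flatten = w ∧ ∀ u ∈ d, u ≠ [] ∧ IsUword U u

/-- `c₁(w)`: the minimal number of `U`-words needed to write `w` as a reduced
product of `U`-words. -/
noncomputable def c1 {n m : ℕ} (U : Fin m → Wrd n) (w : Wrd n) : ℕ :=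
  sInf {k : ℕ | ∃ d : List (Wrd n), IsUDecomp U w d ∧ d.length = k}

/-- The starting position in `w` of the `i`-th factor of a decomposition. -/
def factorStart {n : ℕ} (d : List (Wrd n)) (i : ℕ) : ℕ :=
  ((d.take i).map List.length).sum

/-! If `w_i` ended before `w_i'` started, then `w₁'⋯w_{i-1}'` followed by the part of
`w_{i+1}⋯w_k` that comes after position `start(w_i')` would spell `w`. Cutting a prefix off a
`U`-word leaves a `U`-word, so this is a decomposition into at most `k - 1` `U`-words,
contradicting `k = c₁(w)`. -/

namespace List

variable {α : Type*}

def dropFlatten : ℕ → List (List α) → List (List α)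
  | _, [] => []
  | j, u :: L => if u.length ≤ j then dropFlatten (j - u.length) L else u.drop j :: L

theorem flatten_dropFlatten (j : ℕ) (L : List (List α)) :
    (dropFlatten j L).flatten = L.flatten.drop j := by
  induction L generalizing j with
  | nil => simp [dropFlatten]
  | cons u L ih =>
    by_cases h : u.length ≤ j
    · simp [dropFlatten, h, ih, List.drop_append, List.drop_eq_nil_of_le h]
    · simp [dropFlatten, h, List.drop_append, Nat.sub_eq_zero_of_le (le_of_not_ge h)]

theorem length_dropFlatten_le (j : ℕ) (L : List (List α)) :
    (dropFlatten j L).length ≤ L.length := by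
  induction L generalizing j with
  | nil => simp [dropFlatten]
  | cons u L ih =>
    by_cases h : u.length ≤ j
    · simpa [dropFlatten, h] using (ih _).trans (Nat.le_succ _)
    · simp [dropFlatten, h]

theorem exists_suffix_of_mem_dropFlatten {j : ℕ} {L : List (List α)} (hL : [] ∉ L)
    {v : List α} (hv : v ∈ dropFlatten j L) : v ≠ [] ∧ ∃ u ∈ L, v <:+ u := by
  induction L generalizing j with
  | nil => simp [dropFlatten] at hv
  | cons u L ih =>
    have hL' : [] ∉ L := fun h => hL (mem_cons_of_mem _ h)
    by_cases h : u.length ≤ j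
    · simp only [dropFlatten, if_pos h] at hv
      obtain ⟨hne, u', hu', hsuf⟩ := ih hL' hv
      exact ⟨hne, u', mem_cons_of_mem _ hu', hsuf⟩
    · simp only [dropFlatten, if_neg h] at hv
      rcases mem_cons.mp hv with rfl | hv
      · exact ⟨by simpa using h, u, mem_cons_self, drop_suffix _ _⟩
      · exact ⟨fun h => hL' (h ▸ hv), v, mem_cons_of_mem _ hv, suffix_refl v⟩

end List

section Positions

theorem factorStart_eq_sum_take_map_length {n : ℕ} (d : List (Wrd n)) (i : ℕ) :
    factorStart d i = ((d.map List.length).take i).sum := by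
  simp [factorStart, List.map_take]

theorem factorStart_succ {n : ℕ} (d : List (Wrd n)) {i : ℕ} (h : i < d.length) :
    factorStart d (i + 1) = factorStart d i + d[i].length := by
  rw [factorStart_eq_sum_take_map_length, factorStart_eq_sum_take_map_length,
    List.sum_take_succ _ i (by simpa using h), List.getElem_map]

theorem flatten_take_eq_take_factorStart {n : ℕ} (d : List (Wrd n)) (i : ℕ) :
    (d.take i).flatten = d.flatten.take (factorStart d i) := by
  rw [factorStart_eq_sum_take_map_length, List.take_sum_flatten]

theorem flatten_drop_eq_drop_factorStart {n : ℕ} (d : List (Wrd n)) (i : ℕ) :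
    (d.drop i).flatten = d.flatten.drop (factorStart d i) := by
  rw [factorStart_eq_sum_take_map_length, List.drop_sum_flatten]

theorem flatten_take_append_dropFlatten {n : ℕ} {d d' : List (Wrd n)}
    (hflat : d.flatten = d'.flatten) {i j : ℕ} (hij : factorStart d j ≤ factorStart d' i) :
    (d'.take i ++ (d.drop j).dropFlatten (factorStart d' i - factorStart d j)).flatten =
      d'.flatten := by
  rw [List.flatten_append, List.flatten_dropFlatten, flatten_take_eq_take_factorStart,
    flatten_drop_eq_drop_factorStart, hflat, List.drop_drop, Nat.add_sub_cancel' hij,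
    List.take_append_drop]

end Positions

section Decompositions

variable {n m : ℕ} {U : Fin m → Wrd n}

theorem IsUword.of_infix {u v : Wrd n} (hu : IsUword U u) (h : v <:+: u) : IsUword U v := by
  obtain ⟨r, p, hu⟩ := hu
  exact ⟨r, p, hu.imp h.trans h.trans⟩

theorem c1_le_length {w : Wrd n} {d : List (Wrd n)} (hd : IsUDecomp U w d) :
    c1 U w ≤ d.length :=
  Nat.sInf_le ⟨d, hd, rfl⟩

theorem IsUDecomp.splice {w : Wrd n} {d d' : List (Wrd n)} (hd : IsUDecomp U w d)
    (hd' : IsUDecomp U w d') {i j : ℕ} (hij : factorStart d j ≤ factorStart d' i) :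
    IsUDecomp U w (d'.take i ++ (d.drop j).dropFlatten (factorStart d' i - factorStart d j)) := by
  refine ⟨(flatten_take_append_dropFlatten (hd.1.trans hd'.1.symm) hij).trans hd'.1, ?_⟩
  intro v hv
  rcases List.mem_append.mp hv with hv | hv
  · exact hd'.2 v (List.mem_of_mem_take hv)
  · have hne : [] ∉ d.drop j := fun h => (hd.2 _ (List.mem_of_mem_drop h)).1 rfl
    obtain ⟨hv, u, hu, hsuf⟩ := List.exists_suffix_of_mem_dropFlatten hne hv
    exact ⟨hv, (hd.2 u (List.mem_of_mem_drop hu)).2.of_infix hsuf.isInfix⟩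

theorem c1_lt_length_of_factor_precedes {w : Wrd n} {d d' : List (Wrd n)}
    (hd : IsUDecomp U w d) (hd' : IsUDecomp U w d') {i : ℕ} (hi : i < d.length)
    (hprec : factorStart d i + d[i].length ≤ factorStart d' i) :
    c1 U w < d.length := by
  rw [← factorStart_succ d hi] at hprec
  have hspliced := c1_le_length (hd.splice hd' hprec)
  have hshort := List.length_dropFlatten_le (factorStart d' i - factorStart d (i + 1))
    (d.drop (i + 1))
  simp only [List.length_append, List.length_take, List.length_drop] at hspliced hshort
  omega

end Decompositions

theorem admissible_decompositions_overlap_general (n m : ℕ) (U : Fin m → Wrd n)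
    (w : Wrd n) (k : ℕ) (hk : c1 U w = k)
    (d d' : List (Wrd n))
    (hd : IsUDecomp U w d) (hdl : d.length = k)
    (hd' : IsUDecomp U w d') (hdl' : d'.length = k)
    (i : Fin k) :
    factorStart d i < factorStart d' i + (d'.get (Fin.cast hdl'.symm i)).length ∧
    factorStart d' i < factorStart d i + (d.get (Fin.cast hdl.symm i)).length := by
  constructor <;> by_contra! hprec
  · have := c1_lt_length_of_factor_precedes hd' hd (by omega) hprec
    omega
  · have := c1_lt_length_of_factor_precedes hd hd' (by omega) hprec
    omega

/-- in any two admissible decompositions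
`w = w₁⋯w_k = w₁'⋯w_k'` (with `k = c₁(w)`), for every `i` the factors `w_i`
and `w_i'` overlap nontrivially as subwords of `w` (their position intervals
intersect). -/
theorem admissible_decompositions_overlap (n m : ℕ) (U : Fin m → Wrd n)
    (w : Wrd n) (hred : IsReducedW w) (k : ℕ) (hk : c1 U w = k)
    (d d' : List (Wrd n))
    (hd : IsUDecomp U w d) (hdl : d.length = k)
    (hd' : IsUDecomp U w d') (hdl' : d'.length = k)
    (i : Fin k) :
    factorStart d i < factorStart d' i + (d'.get (Fin.cast hdl'.symm i)).length ∧
    factorStart d' i < factorStart d i + (d.get (Fin.cast hdl.symm i)).length :=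
  admissible_decompositions_overlap_general n m U w k hk d d' hd hdl hd' hdl' i
end
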